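/- In any optimal biclustering 𝓑 of a bipartite graph G, every vertex v is incident to at most deg_G(v) modified edges. -/

import Mathlib

def BipartiteWith {V : Type*} (G : SimpleGraph V) (side : V → Bool) : Prop :=
  ∀ u v, G.Adj u v → side u ≠ side v

def BiclusterGraph {V : Type*} (G : SimpleGraph V) (side : V → Bool) : Prop :=
  ∀ u v, G.Reachable u v → side u ≠ side v → G.Adj u v

def Biclustering {V : Type*} (B : SimpleGraph V) (side : V → Bool) : Prop :=
  BipartiteWith B side ∧ BiclusterGraph B side

/-!
Isolating `v` in `𝓑` (deleting its incident edges) gives another biclustering. Its modified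
edges away from `v` are those of `𝓑`, and at `v` they are exactly the `deg_G v` edges of `G`
at `v`. Optimality of `𝓑` therefore bounds the modified edges of `𝓑` at `v` by `deg_G v`.
-/

namespace SimpleGraph

variable {V : Type*}

lemma neighborSet_deleteIncidenceSet_self (G : SimpleGraph V) (v : V) :
    (G.deleteIncidenceSet v).neighborSet v = ∅ := by
  ext w
  simp only [mem_neighborSet, deleteIncidenceSet_adj, Set.mem_empty_iff_false, iff_false]
  exact fun h => h.2.1 rfl

lemma ncard_incidenceSet_eq_ncard_neighborSet (G : SimpleGraph V) (v : V) :
    (G.incidenceSet v).ncard = (G.neighborSet v).ncard := by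
  classical
  exact Nat.card_congr (G.incidenceSetEquivNeighborSet v)

lemma symmDiff_edgeSet_deleteIncidenceSet_inter (G B : SimpleGraph V) (v : V) :
    symmDiff G.edgeSet (B.deleteIncidenceSet v).edgeSet ∩ {e | v ∈ e} = G.incidenceSet v := by
  ext e
  simp only [edgeSet_deleteIncidenceSet, incidenceSet, Set.mem_inter_iff, Set.mem_symmDiff,
    Set.mem_sdiff, Set.mem_ofPred_eq]
  tauto

lemma symmDiff_edgeSet_deleteIncidenceSet_sdiff (G B : SimpleGraph V) (v : V) :
    symmDiff G.edgeSet (B.deleteIncidenceSet v).edgeSet \ {e | v ∈ e} =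
      symmDiff G.edgeSet B.edgeSet \ {e | v ∈ e} := by
  ext e
  simp only [edgeSet_deleteIncidenceSet, incidenceSet, Set.mem_symmDiff, Set.mem_sdiff,
    Set.mem_ofPred_eq]
  tauto

lemma ncard_symmDiff_edgeSet_deleteIncidenceSet [Finite V] (G B : SimpleGraph V) (v : V) :
    (symmDiff G.edgeSet (B.deleteIncidenceSet v).edgeSet).ncard =
      (G.incidenceSet v).ncard + (symmDiff G.edgeSet B.edgeSet \ {e | v ∈ e}).ncard := by
  rw [← Set.ncard_inter_add_ncard_sdiff_eq_ncard _ {e | v ∈ e},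
    symmDiff_edgeSet_deleteIncidenceSet_inter, symmDiff_edgeSet_deleteIncidenceSet_sdiff]

end SimpleGraph

open SimpleGraph in
lemma Biclustering.deleteIncidenceSet {V : Type*} {B : SimpleGraph V} {side : V → Bool}
    (hB : Biclustering B side) (v : V) : Biclustering (B.deleteIncidenceSet v) side := by
  refine ⟨fun a b hab => hB.1 a b (deleteIncidenceSet_adj.mp hab).1, fun a b hr hs => ?_⟩
  have hab : a ≠ b := fun h => hs (congrArg side h)
  have ha : a ≠ v := by
    rintro rfl
    exact not_reachable_of_neighborSet_left_eq_empty hab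
      (B.neighborSet_deleteIncidenceSet_self a) hr
  have hb : b ≠ v := by
    rintro rfl
    exact not_reachable_of_neighborSet_left_eq_empty hab.symm
      (B.neighborSet_deleteIncidenceSet_self b) hr.symm
  exact deleteIncidenceSet_adj.mpr
    ⟨hB.2 a b (hr.mono (B.deleteIncidenceSet_le v)) hs, ha, hb⟩

theorem stmt_13_general {V : Type*} [Fintype V] (G B : SimpleGraph V) (side : V → Bool)
    (hB : Biclustering B side)
    (hopt : ∀ B' : SimpleGraph V, Biclustering B' side →
      (symmDiff G.edgeSet B.edgeSet).ncard ≤ (symmDiff G.edgeSet B'.edgeSet).ncard) :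
    ∀ v : V, {e ∈ symmDiff G.edgeSet B.edgeSet | v ∈ e}.ncard ≤ (G.neighborSet v).ncard := by
  intro v
  have hcost := hopt _ (hB.deleteIncidenceSet v)
  rw [G.ncard_symmDiff_edgeSet_deleteIncidenceSet,
    ← Set.ncard_inter_add_ncard_sdiff_eq_ncard (symmDiff G.edgeSet B.edgeSet) {e | v ∈ e}]
    at hcost
  rw [← G.ncard_incidenceSet_eq_ncard_neighborSet]
  exact Nat.le_of_add_le_add_right hcost

theorem stmt_13 {V : Type*} [Fintype V] (G B : SimpleGraph V) (side : V → Bool)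
    (hG : BipartiteWith G side) (hB : Biclustering B side)
    (hopt : ∀ B' : SimpleGraph V, Biclustering B' side →
      (symmDiff G.edgeSet B.edgeSet).ncard ≤ (symmDiff G.edgeSet B'.edgeSet).ncard) :
    ∀ v : V, {e ∈ symmDiff G.edgeSet B.edgeSet | v ∈ e}.ncard ≤ (G.neighborSet v).ncard :=
  stmt_13_general G B side hB hopt
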